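/- Let p be an odd prime not dividing Q, with parameters P = √R, Q, D = R - 4Q, where gcd(R,Q) = 1. Set σ = (R/p) and ε = (D/p) (Legendre symbols), assuming p ∤ RD. Then p divides the integer Ū_{p-σε}, where Ū_n = U_n/√R for even n and Ū_n = U_n for odd n, U being the Lucas sequence with parameters √R, Q over ℤ[√R]. -/

import Mathlib

/-- The Lucas sequence with parameters `P = √R`, `Q` in `ℤ[√R]`. -/
def lucasU (R Q : ℤ) : ℕ → Zsqrtd R
  | 0 => 0
  | 1 => 1
  | n + 2 => Zsqrtd.sqrtd * lucasU R Q (n + 1) - (Q : Zsqrtd R) * lucasU R Q n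

/-- The normalized (integer) Lucas sequence: `U n / √R` if `n` even, `U n` if `n` odd. -/
def Ubar (R Q : ℤ) (n : ℕ) : ℤ :=
  if Even n then (lucasU R Q n).im else (lucasU R Q n).re

/-!
Reduce modulo `p` into `B = 𝔽_p[√R][√D]`, where the recurrence has the characteristic roots
`α, β = (√R ± √D) / 2`, so that `(α - β) U_n = α ^ n - β ^ n`. Frobenius and Euler's criterion
give `(α + β) ^ p = σ (α + β)` and `(α - β) ^ p = ε (α - β)`; these force
`α ^ (p - 1) = β ^ (p - 1)` when `σε = 1` and `α ^ (p + 1) = β ^ (p + 1)` when `σε = -1`.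
As `2QD` is invertible mod `p`, `U_{p-σε}` vanishes in `B`, hence in `𝔽_p[√R]`, where it
vanishes exactly when `p` divides both of its coordinates.
-/

open QuadraticAlgebra

theorem ZMod.two_ne_zero_of_odd {p : ℕ} [Fact p.Prime] (hp : Odd p) : (2 : ZMod p) ≠ 0 := by
  intro h
  have hp2 : p ∣ 2 := (ZMod.natCast_eq_zero_iff 2 p).mp (by exact_mod_cast h)
  rw [(Nat.prime_dvd_prime_iff_eq Fact.out Nat.prime_two).mp hp2] at hp
  exact Nat.not_odd_iff_even.mpr even_two hp

namespace Zsqrtd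

def toQuadraticAlgebra (K : Type*) [CommRing K] (d : ℤ) : ℤ√d →+* QuadraticAlgebra K d 0 :=
  lift ⟨ω, by ext <;> simp⟩

@[simp]
theorem toQuadraticAlgebra_sqrtd (K : Type*) [CommRing K] (d : ℤ) :
    toQuadraticAlgebra K d sqrtd = ω := by
  simp [toQuadraticAlgebra]

theorem toQuadraticAlgebra_eq_zero_iff {p : ℕ} {d : ℤ} (z : ℤ√d) :
    toQuadraticAlgebra (ZMod p) d z = 0 ↔ (p : ℤ) ∣ z.re ∧ (p : ℤ) ∣ z.im := by
  simp [toQuadraticAlgebra, QuadraticAlgebra.ext_iff, ZMod.intCast_zmod_eq_zero_iff_dvd]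

end Zsqrtd

theorem sub_mul_map_lucasU {B : Type*} [CommRing B] {R Q : ℤ} (f : ℤ√R →+* B) {α β : B}
    (hadd : α + β = f Zsqrtd.sqrtd) (hmul : α * β = Q) (n : ℕ) :
    (α - β) * f (lucasU R Q n) = α ^ n - β ^ n := by
  induction n using Nat.twoStepInduction with
  | zero => simp [lucasU]
  | one => simp [lucasU]
  | more n ih₀ ih₁ =>
    rw [lucasU, map_sub, map_mul, map_mul, map_intCast, ← hadd, ← hmul]
    linear_combination (α + β) * ih₁ - α * β * ih₀

section Frobenius

variable {B : Type*} [CommRing B] {p : ℕ} [Fact p.Prime] [CharP B p] {α β c : B}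

theorem pow_prime_eq_legendreSym_mul (hp : Odd p) {x : B} {a : ℤ} (hx : x ^ 2 = a) :
    x ^ p = legendreSym p a * x := by
  have hcast : ((legendreSym p a : ℤ) : B) = (a : B) ^ (p / 2) := by
    simpa using congrArg (ZMod.castHom (dvd_refl p) B) (legendreSym.eq_pow p a)
  rw [hcast, ← hx, ← pow_mul, ← pow_succ, Nat.two_mul_div_two_add_one_of_odd hp]

theorem two_mul_mul_sub_pow_pred_eq_zero (hs : (α + β) ^ p = c * (α + β))
    (hd : (α - β) ^ p = c * (α - β)) : 2 * (α * β) * (α ^ (p - 1) - β ^ (p - 1)) = 0 := by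
  obtain ⟨m, hm⟩ : ∃ m, p = m + 1 := Nat.exists_eq_add_one.mpr (Fact.out : p.Prime).pos
  rw [add_pow_char, hm] at hs
  rw [sub_pow_char, hm] at hd
  rw [hm, Nat.add_sub_cancel]
  linear_combination (β - α) * hs + (α + β) * hd

theorem two_mul_sub_pow_succ_eq_zero (hs : (α + β) ^ p = c * (α + β))
    (hd : (α - β) ^ p = -c * (α - β)) : 2 * (α ^ (p + 1) - β ^ (p + 1)) = 0 := by
  rw [add_pow_char] at hs
  rw [sub_pow_char] at hd
  linear_combination (α - β) * hs + (α + β) * hd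

theorem two_mul_mul_sub_pow_eq_zero {σ ε : ℤ} (hσ : σ = 1 ∨ σ = -1) (hε : ε = 1 ∨ ε = -1)
    (hs : (α + β) ^ p = σ * (α + β)) (hd : (α - β) ^ p = ε * (α - β)) :
    2 * (α * β) * (α ^ (p - σ * ε).toNat - β ^ (p - σ * ε).toNat) = 0 := by
  obtain ⟨hn, hεσ⟩ | ⟨hn, hεσ⟩ : ((p : ℤ) - σ * ε).toNat = p - 1 ∧ (ε : B) = σ ∨
      ((p : ℤ) - σ * ε).toNat = p + 1 ∧ (ε : B) = -σ := by
    rcases hσ with rfl | rfl <;> rcases hε with rfl | rfl <;> simp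
  · rw [hn]
    exact two_mul_mul_sub_pow_pred_eq_zero hs (hεσ ▸ hd)
  · rw [hn, mul_comm 2, mul_assoc, two_mul_sub_pow_succ_eq_zero hs (hεσ ▸ hd), mul_zero]

end Frobenius

theorem map_lucasU_eq_zero {B : Type*} [CommRing B] {p : ℕ} [Fact p.Prime] [CharP B p]
    (hp : Odd p) {R Q : ℤ} (hQ : (Q : ZMod p) ≠ 0) (hR : (R : ZMod p) ≠ 0)
    (hD : ((R - 4 * Q : ℤ) : ZMod p) ≠ 0) (f : ℤ√R →+* B) {α β : B}
    (hadd : α + β = f Zsqrtd.sqrtd) (hmul : α * β = Q) :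
    f (lucasU R Q (p - legendreSym p R * legendreSym p (R - 4 * Q)).toNat) = 0 := by
  have hr : (α + β) ^ 2 = R := by rw [hadd, sq, ← map_mul, Zsqrtd.dmuld, map_intCast]
  have hδ : (α - β) ^ 2 = (R - 4 * Q : ℤ) := by push_cast; linear_combination hr - 4 * hmul
  have hunit : IsUnit ((2 * Q * (R - 4 * Q) : ℤ) : B) := by
    have h : ((2 * Q * (R - 4 * Q) : ℤ) : ZMod p) ≠ 0 := by
      rw [Int.cast_mul, Int.cast_mul]
      exact mul_ne_zero (mul_ne_zero (by exact_mod_cast ZMod.two_ne_zero_of_odd hp) hQ) hD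
    simpa only [map_intCast] using (IsUnit.mk0 _ h).map (ZMod.castHom (dvd_refl p) B)
  have hvanish := two_mul_mul_sub_pow_eq_zero (legendreSym.eq_one_or_neg_one p hR)
    (legendreSym.eq_one_or_neg_one p hD) (pow_prime_eq_legendreSym_mul hp hr)
    (pow_prime_eq_legendreSym_mul hp hδ)
  rw [← sub_mul_map_lucasU f hadd hmul, hmul] at hvanish
  refine hunit.mul_right_eq_zero.mp ?_
  rw [Int.cast_mul, ← hδ, Int.cast_mul, Int.cast_two]
  linear_combination (α - β) * hvanish

theorem toQuadraticAlgebra_lucasU_eq_zero {p : ℕ} [Fact p.Prime] (hp : Odd p) {R Q : ℤ}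
    (hQ : (Q : ZMod p) ≠ 0) (hR : (R : ZMod p) ≠ 0) (hD : ((R - 4 * Q : ℤ) : ZMod p) ≠ 0) :
    Zsqrtd.toQuadraticAlgebra (ZMod p) R
      (lucasU R Q (p - legendreSym p R * legendreSym p (R - 4 * Q)).toNat) = 0 := by
  let A := QuadraticAlgebra (ZMod p) R 0
  let B := QuadraticAlgebra A (R - 4 * Q : ℤ) 0
  have : CharP A p := charP_of_injective_algebraMap QuadraticAlgebra.algebraMap_injective p
  have : CharP B p := charP_of_injective_algebraMap QuadraticAlgebra.algebraMap_injective p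
  let half : B := algebraMap (ZMod p) B 2⁻¹
  let r : B := algebraMap A B ω
  let δ : B := ω
  have hhalf : 2 * half = 1 := by
    rw [← map_ofNat (algebraMap (ZMod p) B) 2, ← map_mul,
      mul_inv_cancel₀ (ZMod.two_ne_zero_of_odd hp), map_one]
  have hr : r * r = R := by
    rw [← map_mul, omega_mul_omega_eq_mk, ← map_intCast (algebraMap A B)]
    rfl
  have hδ : δ * δ = (R - 4 * Q : ℤ) := by
    rw [omega_mul_omega_eq_mk]
    rfl
  refine QuadraticAlgebra.algebraMap_injective (R := A) (a := ((R - 4 * Q : ℤ) : A)) (b := 0) ?_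
  rw [map_zero]
  refine map_lucasU_eq_zero hp hQ hR hD ((algebraMap A B).comp (Zsqrtd.toQuadraticAlgebra _ R))
    (α := half * (r + δ)) (β := half * (r - δ)) ?_ ?_
  · rw [RingHom.comp_apply, Zsqrtd.toQuadraticAlgebra_sqrtd]
    linear_combination r * hhalf
  · push_cast at hδ
    linear_combination half ^ 2 * hr - half ^ 2 * hδ + Q * (2 * half + 1) * hhalf

theorem lucas_dvd_Ubar_p_sub_sigma_eps_general (R Q : ℤ) (D : ℤ)
    (hD : D = R - 4 * Q) (p : ℕ) (hp : p.Prime) (hodd : Odd p)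
    (hpQRD : ¬ ((p : ℤ) ∣ Q * R * D)) :
    (p : ℤ) ∣ Ubar R Q ((p : ℤ) - @legendreSym p ⟨hp⟩ R * @legendreSym p ⟨hp⟩ D).toNat := by
  have : Fact p.Prime := ⟨hp⟩
  subst hD
  obtain ⟨⟨hQ, hR⟩, hD⟩ :
      ((Q : ZMod p) ≠ 0 ∧ (R : ZMod p) ≠ 0) ∧ ((R - 4 * Q : ℤ) : ZMod p) ≠ 0 := by
    simpa only [← ZMod.intCast_zmod_eq_zero_iff_dvd, Int.cast_mul, mul_ne_zero_iff] using hpQRD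
  obtain ⟨hre, him⟩ := (Zsqrtd.toQuadraticAlgebra_eq_zero_iff _).mp
    (toQuadraticAlgebra_lucasU_eq_zero hodd hQ hR hD)
  unfold Ubar
  split_ifs
  exacts [him, hre]

theorem lucas_dvd_Ubar_p_sub_sigma_eps (R Q : ℤ) (hRQ : IsCoprime R Q) (D : ℤ)
    (hD : D = R - 4 * Q) (p : ℕ) (hp : p.Prime) (hodd : Odd p)
    (hpQRD : ¬ ((p : ℤ) ∣ Q * R * D)) :
    (p : ℤ) ∣ Ubar R Q ((p : ℤ) - @legendreSym p ⟨hp⟩ R * @legendreSym p ⟨hp⟩ D).toNat :=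
  lucas_dvd_Ubar_p_sub_sigma_eps_general R Q D hD p hp hodd hpQRD
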